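/- arXiv:2107.09550 — 3 statements merged into one kernel-verified Lean document; each statement's English description precedes it below -/
import Mathlib

section
/- Let F : ℝ^K → ℝ₊ be a nonnegative differentiable function, let t ∈ ℕ, L > 0, a₀ ∈ ℝ^K, set λ = 1/L and define a_{k+1} = a_k − λ·(∇F)(a_k) for k ∈ {0,1,…,t−1}. Assume ‖(∇F)(a)‖ ≤ √(2·t·L·max{F(a₀),1}) for all a with ‖a − a₀‖ ≤ √(2·t·max{F(a₀),1}/L), and ‖(∇F)(a) − (∇F)(b)‖ ≤ L·‖a − b‖ for all a, b with ‖a − a₀‖ ≤ √(8·(t/L)·max{F(a₀),1}) and ‖b − a₀‖ ≤ √(8·(t/L)·max{F(a₀),1}). Then: (i) ‖a_k − a₀‖ ≤ √(2·(k/L)·(F(a₀) − F(a_k))) for all k ∈ {1,…,t}; (ii) Σ_{k=0}^{s−1} ‖a_{k+1} − a_k‖² ≤ (2/L)·(F(a₀) − F(a_s)) for all s ∈ {1,…,t}; and (iii) F(a_k) ≤ F(a_{k−1}) for all k ∈ {1,…,t}. -/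
/-!
By strong induction on `k`, every gradient step decreases `F` by at least `(L/2)‖a (k+1) - a k‖²`.
If this holds for the earlier steps, the squared step lengths telescope to at most
`(2/L)(F (a 0) - F (a k))`, and Cauchy–Schwarz gives `‖a k - a 0‖² ≤ k (2/L) F (a 0) ≤ R²` with
`R = √(2 t max (F (a 0)) 1 / L)`. Then `‖∇F (a k)‖ ≤ L R`, so the next step has length at most `R`
and stays in the ball of radius `2R` around `a 0`, where `∇F` is `L`-Lipschitz; there the descent
lemma `F y ≤ F x + ⟪∇F x, y - x⟫ + (L/2)‖y - x‖²` gives the decrease for step `k` too.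
-/

open Finset Metric Set
open scoped RealInnerProductSpace

theorem sum_range_le_mul_sub_of_le {u f : ℕ → ℝ} {c : ℝ} {k : ℕ}
    (h : ∀ j < k, u j ≤ c * (f j - f (j + 1))) : ∑ j ∈ range k, u j ≤ c * (f 0 - f k) :=
  calc ∑ j ∈ range k, u j ≤ ∑ j ∈ range k, c * (f j - f (j + 1)) :=
        sum_le_sum fun j hj => h j (mem_range.1 hj)
    _ = c * (f 0 - f k) := by rw [← mul_sum, sum_range_sub']

theorem norm_sub_le_sqrt_of_sum_sq_le {E : Type*} [SeminormedAddCommGroup E] (a : ℕ → E) {k : ℕ}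
    {c : ℝ} (h : ∑ j ∈ range k, ‖a (j + 1) - a j‖ ^ 2 ≤ c) : ‖a k - a 0‖ ≤ √(k * c) := by
  refine Real.le_sqrt_of_sq_le ?_
  calc ‖a k - a 0‖ ^ 2 ≤ (∑ j ∈ range k, ‖a (j + 1) - a j‖) ^ 2 := by
        rw [← sum_range_sub]
        gcongr
        exact norm_sum_le _ _
    _ ≤ k * ∑ j ∈ range k, ‖a (j + 1) - a j‖ ^ 2 := by
        simpa using sq_sum_le_card_mul_sum_sq (s := range k) (f := fun j => ‖a (j + 1) - a j‖)
    _ ≤ k * c := by gcongr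

section Descent

variable {E : Type*} [NormedAddCommGroup E] [InnerProductSpace ℝ E] [CompleteSpace E]
  {F : E → ℝ} {L : ℝ}

theorem DifferentiableAt.hasDerivAt_comp_add_smul {x d : E} {τ : ℝ}
    (hF : DifferentiableAt ℝ F (x + τ • d)) :
    HasDerivAt (fun s : ℝ => F (x + s • d)) ⟪gradient F (x + τ • d), d⟫ τ := by
  rw [inner_gradient_left]
  have hline : HasDerivAt (fun s : ℝ => x + s • d) d τ := by
    simpa using ((hasDerivAt_id τ).smul_const d).const_add x
  exact hF.hasFDerivAt.comp_hasDerivAt τ hline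

theorem le_add_inner_gradient_add_sq_of_lipschitz_on_segment (hF : Differentiable ℝ F) {x y : E}
    (hlip : ∀ z ∈ segment ℝ x y, ‖gradient F z - gradient F x‖ ≤ L * ‖z - x‖) :
    F y ≤ F x + ⟪gradient F x, y - x⟫ + L / 2 * ‖y - x‖ ^ 2 := by
  set d := y - x
  set g : ℝ → ℝ := fun τ => F (x + τ • d) - τ * ⟪gradient F x, d⟫ - L / 2 * τ ^ 2 * ‖d‖ ^ 2
  have hg : ∀ τ, HasDerivAt g
      (⟪gradient F (x + τ • d), d⟫ - ⟪gradient F x, d⟫ - L * τ * ‖d‖ ^ 2) τ := by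
    intro τ
    refine (((hF (x + τ • d)).hasDerivAt_comp_add_smul.sub
      ((hasDerivAt_id τ).mul_const ⟪gradient F x, d⟫)).sub
      (((hasDerivAt_pow 2 τ).const_mul (L / 2)).mul_const (‖d‖ ^ 2))).congr_deriv ?_
    simp only [one_mul, Nat.cast_ofNat, Nat.add_one_sub_one, pow_one]
    ring
  have hanti : AntitoneOn g (Icc 0 1) := by
    refine antitoneOn_of_deriv_nonpos (convex_Icc 0 1)
      (fun τ _ => (hg τ).continuousAt.continuousWithinAt)
      (fun τ _ => (hg τ).differentiableAt.differentiableWithinAt) fun τ hτ => ?_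
    rw [interior_Icc] at hτ
    have hz : x + τ • d ∈ segment ℝ x y := by
      rw [segment_eq_image']
      exact ⟨τ, Ioo_subset_Icc_self hτ, rfl⟩
    have hlipτ := hlip _ hz
    rw [add_sub_cancel_left, norm_smul, Real.norm_of_nonneg hτ.1.le] at hlipτ
    have hinner : ⟪gradient F (x + τ • d) - gradient F x, d⟫ ≤ L * τ * ‖d‖ ^ 2 :=
      calc _ ≤ ‖gradient F (x + τ • d) - gradient F x‖ * ‖d‖ := real_inner_le_norm _ _
        _ ≤ L * (τ * ‖d‖) * ‖d‖ := by gcongr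
        _ = L * τ * ‖d‖ ^ 2 := by ring
    rw [(hg τ).deriv, ← inner_sub_left]
    linarith
  have h10 := hanti (left_mem_Icc.2 zero_le_one) (right_mem_Icc.2 zero_le_one) zero_le_one
  simp only [g, one_smul, zero_smul, add_zero, one_pow, one_mul, zero_mul, sub_zero,
    add_sub_cancel, d] at h10
  linarith

theorem sq_norm_sub_le_of_gradient_step (hF : Differentiable ℝ F) (hL : 0 < L) {x y : E}
    (hy : y = x - (1 / L) • gradient F x)
    (hlip : ∀ z ∈ segment ℝ x y, ‖gradient F z - gradient F x‖ ≤ L * ‖z - x‖) :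
    ‖y - x‖ ^ 2 ≤ 2 / L * (F x - F y) := by
  have hgrad : gradient F x = L • (x - y) := by
    rw [hy, sub_sub_cancel, smul_smul, mul_one_div_cancel hL.ne', one_smul]
  have h := le_add_inner_gradient_add_sq_of_lipschitz_on_segment hF hlip
  rw [hgrad, real_inner_smul_left, ← neg_sub y x, inner_neg_left, real_inner_self_eq_norm_sq] at h
  rw [div_mul_eq_mul_div, le_div_iff₀ hL]
  linarith

theorem sq_norm_sub_le_of_gradient_step_of_mem_closedBall (hF : Differentiable ℝ F) (hL : 0 < L)
    {x₀ x y : E} {R : ℝ} (hy : y = x - (1 / L) • gradient F x) (hx : x ∈ closedBall x₀ R)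
    (hgrad : ‖gradient F x‖ ≤ L * R)
    (hlip : ∀ z ∈ closedBall x₀ (2 * R), ∀ w ∈ closedBall x₀ (2 * R),
      ‖gradient F z - gradient F w‖ ≤ L * ‖z - w‖) :
    ‖y - x‖ ^ 2 ≤ 2 / L * (F x - F y) := by
  rw [mem_closedBall_iff_norm] at hx
  have hyx : ‖y - x‖ ≤ R := by
    rw [hy, sub_sub_cancel_left, norm_neg, norm_smul, Real.norm_of_nonneg (by positivity),
      one_div_mul_eq_div, div_le_iff₀' hL]
    exact hgrad
  have hxB : x ∈ closedBall x₀ (2 * R) :=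
    mem_closedBall_iff_norm.2 (by linarith [norm_nonneg (x - x₀)])
  have hyB : y ∈ closedBall x₀ (2 * R) :=
    mem_closedBall_iff_norm.2 ((norm_sub_le_norm_sub_add_norm_sub y x x₀).trans (by linarith))
  exact sq_norm_sub_le_of_gradient_step hF hL hy fun z hz =>
    hlip z ((convex_closedBall x₀ _).segment_subset hxB hyB hz) x hxB

theorem sq_norm_sub_le_of_gradient_descent (hF : Differentiable ℝ F) (hF₀ : ∀ x, 0 ≤ F x)
    (hL : 0 < L) {a : ℕ → E} {t : ℕ} {R : ℝ}
    (hstep : ∀ k < t, a (k + 1) = a k - (1 / L) • gradient F (a k))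
    (hR : √(2 * t * F (a 0) / L) ≤ R)
    (hgrad : ∀ x ∈ closedBall (a 0) R, ‖gradient F x‖ ≤ L * R)
    (hlip : ∀ z ∈ closedBall (a 0) (2 * R), ∀ w ∈ closedBall (a 0) (2 * R),
      ‖gradient F z - gradient F w‖ ≤ L * ‖z - w‖) :
    ∀ k < t, ‖a (k + 1) - a k‖ ^ 2 ≤ 2 / L * (F (a k) - F (a (k + 1))) := by
  intro k
  induction k using Nat.strong_induction_on with
  | _ k ih =>
    intro hk
    have hsum := sum_range_le_mul_sub_of_le fun j hj => ih j hj (hj.trans hk)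
    have hdecrease : 0 ≤ F (a 0) - F (a k) := nonneg_of_mul_nonneg_right
      ((sum_nonneg fun _ _ => sq_nonneg _).trans hsum) (by positivity)
    have hx : a k ∈ closedBall (a 0) R := by
      refine mem_closedBall_iff_norm.2 <|
        (norm_sub_le_sqrt_of_sum_sq_le a hsum).trans <| (Real.sqrt_le_sqrt ?_).trans hR
      calc (k : ℝ) * (2 / L * (F (a 0) - F (a k))) ≤ t * (2 / L * F (a 0)) := by
            gcongr
            linarith [hF₀ (a k)]
        _ = 2 * t * F (a 0) / L := by ring
    exact sq_norm_sub_le_of_gradient_step_of_mem_closedBall hF hL (hstep k hk) hx (hgrad _ hx) hlip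

end Descent

/-- Lemma 1, localization lemma for gradient descent. -/
theorem statement8 (K : ℕ) (F : EuclideanSpace ℝ (Fin K) → ℝ)
    (hFnonneg : ∀ x, 0 ≤ F x) (hFdiff : Differentiable ℝ F)
    (t : ℕ) (L : ℝ) (hL : 0 < L)
    (a : ℕ → EuclideanSpace ℝ (Fin K))
    (hstep : ∀ k, k < t → a (k + 1) = a k - (1 / L) • gradient F (a k))
    (hgradbound : ∀ x : EuclideanSpace ℝ (Fin K),
      ‖x - a 0‖ ≤ Real.sqrt (2 * t * max (F (a 0)) 1 / L) →
      ‖gradient F x‖ ≤ Real.sqrt (2 * t * L * max (F (a 0)) 1))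
    (hgradlip : ∀ x y : EuclideanSpace ℝ (Fin K),
      ‖x - a 0‖ ≤ Real.sqrt (8 * (t / L) * max (F (a 0)) 1) →
      ‖y - a 0‖ ≤ Real.sqrt (8 * (t / L) * max (F (a 0)) 1) →
      ‖gradient F x - gradient F y‖ ≤ L * ‖x - y‖) :
    (∀ k, 1 ≤ k → k ≤ t →
        ‖a k - a 0‖ ≤ Real.sqrt (2 * ((k : ℝ) / L) * (F (a 0) - F (a k)))) ∧
    (∀ s, 1 ≤ s → s ≤ t →
        ∑ k ∈ Finset.range s, ‖a (k + 1) - a k‖ ^ 2 ≤ (2 / L) * (F (a 0) - F (a s))) ∧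
    (∀ k, 1 ≤ k → k ≤ t → F (a k) ≤ F (a (k - 1))) := by
  set M := max (F (a 0)) 1
  set R := √(2 * t * M / L)
  have hR_lip : √(8 * (t / L) * M) = 2 * R := by
    rw [show 8 * ((t : ℝ) / L) * M = 2 ^ 2 * (2 * t * M / L) by ring,
      Real.sqrt_mul (by norm_num), Real.sqrt_sq zero_le_two]
  have hR_grad : √(2 * t * L * M) = L * R := by
    rw [show 2 * (t : ℝ) * L * M = L ^ 2 * (2 * t * M / L) by field_simp,
      Real.sqrt_mul (sq_nonneg L), Real.sqrt_sq hL.le]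
  have hdescent := sq_norm_sub_le_of_gradient_descent hFdiff hFnonneg hL hstep
    (Real.sqrt_le_sqrt (by gcongr; exact le_max_left _ _))
    (fun x hx => (hgradbound x (mem_closedBall_iff_norm.1 hx)).trans_eq hR_grad)
    fun z hz w hw => by
      rw [mem_closedBall_iff_norm, ← hR_lip] at hz hw
      exact hgradlip z w hz hw
  have hsum : ∀ s ≤ t, ∑ k ∈ range s, ‖a (k + 1) - a k‖ ^ 2 ≤ 2 / L * (F (a 0) - F (a s)) :=
    fun s hs => sum_range_le_mul_sub_of_le fun j hj => hdescent j (hj.trans_le hs)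
  refine ⟨fun k _ hk => ?_, fun s _ hs => hsum s hs, fun k hk₁ hk => ?_⟩
  · exact (norm_sub_le_sqrt_of_sum_sq_le a (hsum k hk)).trans_eq (by congr 1; ring)
  · obtain ⟨j, rfl⟩ : ∃ j, k = j + 1 := ⟨k - 1, by omega⟩
    rw [Nat.add_sub_cancel, ← sub_nonneg]
    exact nonneg_of_mul_nonneg_right ((sq_nonneg _).trans (hdescent j hk)) (by positivity)
end

section
/- Let σ : ℝ → [0,1] be Lipschitz continuous with Lipschitz constant C_Lip ≥ 1, let K ∈ ℕ (the number of hidden neurons), and let w, w̄ ∈ ℝ^{1+K(d+2)} be two weight vectors defining shallow networks f_{net,w}(x) = w₁,₀^{(1)} + Σ_{j=1}^{K} w₁,ⱼ^{(1)}·σ(Σ_{k=1}^d w_{j,k}^{(0)}·x^{(k)} + w_{j,0}^{(0)}) and f_{net,w̄} analogously. Then for any x ∈ ℝ^d, |f_{net,w}(x) − f_{net,w̄}(x)| ≤ C_Lip · max{‖x‖_∞, 1} · max_{k=1,…,K} max{|w̄₁,ₖ^{(1)}|, 1} · (Σ_{j=0}^{K} |w₁,ⱼ^{(1)} − w̄₁,ⱼ^{(1)}|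 + Σ_{j=1}^{K} (|w_{j,0}^{(0)} − w̄_{j,0}^{(0)}| + Σ_{k=1}^d |w_{j,k}^{(0)} − w̄_{j,k}^{(0)}|)). -/
/-! Neuron by neuron, `a σ(u) - b σ(v) = (a - b) σ(u) + b (σ(u) - σ(v))`: the first term costs
`|a - b|` since `|σ| ≤ 1`, the second at most `|b| C |u - v|`, and `|u - v|` is bounded by
`max (‖x‖_∞, 1)` times the inner weight differences. The factor `C max(‖x‖_∞, 1) max_k max(|w̄ₖ|, 1)`
is at least `1`, so it also absorbs the outer weight differences. -/

noncomputable section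

abbrev Evec (d : ℕ) := EuclideanSpace ℝ (Fin d)

/-- Index type of the weights of a shallow network with `K` neurons in dimension `d`:
outer weights `w₁,₀^{(1)},…,w₁,K^{(1)}`, inner weights `w_{j,k}^{(0)}` and inner biases
`w_{j,0}^{(0)}`. -/
abbrev WIdx (d K : ℕ) := Fin (K + 1) ⊕ (Fin K × Fin d) ⊕ Fin K

/-- The weight space `ℝ^{1+K(d+2)}` with Euclidean norm. -/
abbrev WVec (d K : ℕ) := EuclideanSpace ℝ (WIdx d K)

/-- Outer weight `w₁,ₖ^{(1)}` (with `k = 0` the constant term). -/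
def outw {d K : ℕ} (w : WVec d K) (k : Fin (K + 1)) : ℝ := w (Sum.inl k)

/-- Inner weight `w_{j,i}^{(0)}`. -/
def inw {d K : ℕ} (w : WVec d K) (j : Fin K) (i : Fin d) : ℝ := w (Sum.inr (Sum.inl (j, i)))

/-- Inner bias `w_{j,0}^{(0)}`. -/
def inb {d K : ℕ} (w : WVec d K) (j : Fin K) : ℝ := w (Sum.inr (Sum.inr j))

/-- The shallow neural network with activation `σ` and weight vector `w`. -/
def fnet {d K : ℕ} (σ : ℝ → ℝ) (w : WVec d K) (x : Evec d) : ℝ :=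
  outw w 0 + ∑ j : Fin K, outw w j.succ * σ (∑ i : Fin d, inw w j i * x i + inb w j)

/-- Supremum norm `‖x‖_∞` on `ℝ^d`. -/
def supNorm {d : ℕ} (x : Evec d) : ℝ := ‖(WithLp.equiv 2 (Fin d → ℝ) x : Fin d → ℝ)‖


theorem abs_sub_le_of_abs_le_one_of_lipschitz {σ : ℝ → ℝ} {C : ℝ}
    (hσ1 : ∀ t, |σ t| ≤ 1) (hσlip : ∀ s t, |σ s - σ t| ≤ C * |s - t|) (a b u v : ℝ) :
    |a * σ u - b * σ v| ≤ |a - b| + |b| * (C * |u - v|) :=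
  calc |a * σ u - b * σ v| = |(a - b) * σ u + b * (σ u - σ v)| := by ring_nf
    _ ≤ |a - b| * |σ u| + |b| * |σ u - σ v| := by
      simpa only [abs_mul] using abs_add_le ((a - b) * σ u) (b * (σ u - σ v))
    _ ≤ |a - b| * 1 + |b| * (C * |u - v|) := by
      gcongr
      exacts [hσ1 u, hσlip u v]
    _ = |a - b| + |b| * (C * |u - v|) := by rw [mul_one]

theorem abs_affine_sub_le {ι : Type*} [Fintype ι] (a a' x : ι → ℝ) (b b' : ℝ) {X : ℝ}
    (hX : 1 ≤ X) (hx : ∀ i, |x i| ≤ X) :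
    |(∑ i, a i * x i + b) - (∑ i, a' i * x i + b')| ≤ X * (|b - b'| + ∑ i, |a i - a' i|) :=
  calc |(∑ i, a i * x i + b) - (∑ i, a' i * x i + b')|
        = |∑ i, (a i - a' i) * x i + (b - b')| := by
          simp only [sub_mul, Finset.sum_sub_distrib]; ring_nf
    _ ≤ ∑ i, |a i - a' i| * X + X * |b - b'| := by
      refine (abs_add_le _ _).trans (add_le_add ?_ (le_mul_of_one_le_left (abs_nonneg _) hX))
      refine (Finset.abs_sum_le_sum_abs _ _).trans (Finset.sum_le_sum fun i _ => ?_)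
      rw [abs_mul]
      exact mul_le_mul_of_nonneg_left (hx i) (abs_nonneg _)
    _ = X * (|b - b'| + ∑ i, |a i - a' i|) := by rw [← Finset.sum_mul]; ring

theorem abs_le_supNorm {d : ℕ} (x : Evec d) (i : Fin d) : |x i| ≤ supNorm x :=
  norm_le_pi_norm (WithLp.equiv 2 (Fin d → ℝ) x) i

theorem abs_fnet_sub_le {d K : ℕ} {σ : ℝ → ℝ} {C X M : ℝ}
    (hσ1 : ∀ t, |σ t| ≤ 1) (hσlip : ∀ s t, |σ s - σ t| ≤ C * |s - t|)
    (w wb : WVec d K) {x : Evec d} (hX : 1 ≤ X) (hx : ∀ i, |x i| ≤ X)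
    (hM : ∀ j : Fin K, |outw wb j.succ| ≤ M) :
    |fnet σ w x - fnet σ wb x| ≤
      (∑ j : Fin (K + 1), |outw w j - outw wb j|) +
        C * X * M * ∑ j : Fin K, (|inb w j - inb wb j| + ∑ k : Fin d, |inw w j k - inw wb j k|) := by
  have hC : 0 ≤ C := by simpa using (abs_nonneg _).trans (hσlip 1 0)
  have neuron (j : Fin K) :
      |outw w j.succ * σ (∑ i, inw w j i * x i + inb w j)
          - outw wb j.succ * σ (∑ i, inw wb j i * x i + inb wb j)|
        ≤ |outw w j.succ - outw wb j.succ| +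
          C * X * M * (|inb w j - inb wb j| + ∑ i, |inw w j i - inw wb j i|) := by
    refine (abs_sub_le_of_abs_le_one_of_lipschitz hσ1 hσlip _ _ _ _).trans ?_
    calc _ ≤ |outw w j.succ - outw wb j.succ| +
          M * (C * (X * (|inb w j - inb wb j| + ∑ i, |inw w j i - inw wb j i|))) :=
        add_le_add_right (mul_le_mul (hM j)
          (mul_le_mul_of_nonneg_left (abs_affine_sub_le _ _ _ _ _ hX hx) hC)
          (mul_nonneg hC (abs_nonneg _)) ((abs_nonneg _).trans (hM j))) _
      _ = _ := by ring
  calc |fnet σ w x - fnet σ wb x|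
      = |(outw w 0 - outw wb 0) + ∑ j : Fin K,
          (outw w j.succ * σ (∑ i, inw w j i * x i + inb w j)
            - outw wb j.succ * σ (∑ i, inw wb j i * x i + inb wb j))| := by
        rw [fnet, fnet, Finset.sum_sub_distrib]; ring_nf
    _ ≤ |outw w 0 - outw wb 0| + ∑ j : Fin K, (|outw w j.succ - outw wb j.succ| +
          C * X * M * (|inb w j - inb wb j| + ∑ i, |inw w j i - inw wb j i|)) :=
        (abs_add_le _ _).trans
          (add_le_add_right ((Finset.abs_sum_le_sum_abs _ _).trans (Finset.sum_le_sum
            fun j _ => neuron j)) _)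
    _ = _ := by rw [Fin.sum_univ_succ, Finset.sum_add_distrib, ← Finset.mul_sum]; ring

/-- Lemma 6: Lipschitz dependence of a shallow network on its weights. -/
theorem statement9 (d K : ℕ) (hK : 0 < K) (σ : ℝ → ℝ) (CLip : ℝ) (hCLip : 1 ≤ CLip)
    (hσrange : ∀ x, σ x ∈ Set.Icc (0 : ℝ) 1)
    (hσlip : ∀ x y, |σ x - σ y| ≤ CLip * |x - y|)
    (w wb : WVec d K) (x : Evec d) :
    |fnet σ w x - fnet σ wb x| ≤
      CLip * max (supNorm x) 1 * (⨆ k : Fin K, max |outw wb k.succ| 1) *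
        ((∑ j : Fin (K + 1), |outw w j - outw wb j|) +
          ∑ j : Fin K, (|inb w j - inb wb j| + ∑ k : Fin d, |inw w j k - inw wb j k|)) := by
  set X := max (supNorm x) 1
  set M := ⨆ k : Fin K, max |outw wb k.succ| 1
  have hbdd := Set.finite_range (fun k : Fin K => max |outw wb k.succ| 1) |>.bddAbove
  have hM1 : 1 ≤ M := (le_max_right _ _).trans (le_ciSup hbdd ⟨0, hK⟩)
  have hM (j : Fin K) : |outw wb j.succ| ≤ M := (le_max_left _ _).trans (le_ciSup hbdd j)
  have hX1 : 1 ≤ X := le_max_right _ _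
  have hσ1 (t : ℝ) : |σ t| ≤ 1 := abs_le.2 ⟨by linarith [(hσrange t).1], (hσrange t).2⟩
  have hA : 0 ≤ ∑ j : Fin (K + 1), |outw w j - outw wb j| :=
    Finset.sum_nonneg fun _ _ => abs_nonneg _
  have hCXM : 1 ≤ CLip * X * M := one_le_mul_of_one_le_of_one_le
    (one_le_mul_of_one_le_of_one_le hCLip hX1) hM1
  calc |fnet σ w x - fnet σ wb x|
      ≤ (∑ j : Fin (K + 1), |outw w j - outw wb j|) + CLip * X * M *
          ∑ j : Fin K, (|inb w j - inb wb j| + ∑ k : Fin d, |inw w j k - inw wb j k|) :=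
        abs_fnet_sub_le hσ1 hσlip w wb hX1
          (fun i => (abs_le_supNorm x i).trans (le_max_left _ _)) hM
    _ ≤ _ := by rw [mul_add]; gcongr; exact le_mul_of_one_le_left hA hCXM

end
end

section
/- Let σ(x) = 1/(1+e^{−x}) be the logistic squasher, let K_n ∈ ℕ and let w, w̄ ∈ ℝ^{1+K_n(d+2)} be weight vectors of shallow networks f_{net,w}(x) = w₁,₀^{(1)} + Σ_{j=1}^{K_n} w₁,ⱼ^{(1)}·σ(Σ_{k=1}^d w_{j,k}^{(0)}·x^{(k)} + w_{j,0}^{(0)}). Let γ_n* ≥ 1 and assume |w̄₁,ⱼ^{(1)}| ≤ γ_n* for all j ∈ {1,…,K_n}. Then for any x ∈ [0,1]^d, the sum over all weight coordinates (k,j,l) of |∂f_{net,w}(x)/∂w_{k,j}^{(l)} − ∂f_{net,w̄}(x)/∂w_{k,j}^{(l)}|² is at most 4·(d+1)²·(γ_n*)²·‖w − w̄‖². -/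
noncomputable section

/-- The logistic squasher. -/
def logistic (x : ℝ) : ℝ := 1 / (1 + Real.exp (-x))

/-- The partial derivative of the network output with respect to the weight
coordinate `idx`, evaluated at weight vector `w` and input `x`. -/
def netPartial {d K : ℕ} (w : WVec d K) (x : Evec d) (idx : WIdx d K) : ℝ :=
  fderiv ℝ (fun v => fnet logistic v x) w (EuclideanSpace.single idx (1 : ℝ))

/-! The partial derivatives are explicit: with `zⱼ` the input of neuron `j` and `aⱼ` its
outer weight, they are `1`, `σ(zⱼ)`, `aⱼ σ'(zⱼ) xᵢ` and `aⱼ σ'(zⱼ)`. Since `σ` and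
`σ' = σ(1 - σ)` are both `1/4`-Lipschitz and `|σ'| ≤ 1/4`, neuron `j` contributes at most
`|zⱼ - z̄ⱼ|²/16 + (d+1) γ²/8 (|aⱼ - āⱼ|² + |zⱼ - z̄ⱼ|²)`, and for `x ∈ [0,1]^d`
Cauchy–Schwarz bounds `|zⱼ - z̄ⱼ|²` by `2(d+1)` times the squared distance of the neuron's
inner weights. Summing over the neurons gives the claim. -/

open Real

theorem logistic_eq_sigmoid : logistic = sigmoid := by
  funext x
  rw [logistic, sigmoid_def, one_div]

def dsigmoid (x : ℝ) : ℝ := sigmoid x * (1 - sigmoid x)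

theorem abs_dsigmoid_le (x : ℝ) : |dsigmoid x| ≤ 1 / 4 := by
  have h0 := sigmoid_pos x
  have h1 := sigmoid_lt_one x
  rw [dsigmoid, abs_of_pos (by nlinarith)]
  nlinarith [sq_nonneg (sigmoid x - 1 / 2)]

theorem hasDerivAt_dsigmoid (x : ℝ) :
    HasDerivAt dsigmoid (dsigmoid x * (1 - 2 * sigmoid x)) x := by
  refine ((hasDerivAt_sigmoid x).mul ((hasDerivAt_sigmoid x).const_sub 1)).congr_deriv ?_
  simp only [dsigmoid]
  ring

theorem abs_dsigmoid_deriv_le (x : ℝ) : |dsigmoid x * (1 - 2 * sigmoid x)| ≤ 1 / 4 := by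
  have h0 := sigmoid_pos x
  have h1 := sigmoid_lt_one x
  rw [abs_mul]
  calc |dsigmoid x| * |1 - 2 * sigmoid x| ≤ 1 / 4 * 1 := by
        gcongr
        · exact abs_dsigmoid_le x
        · rw [abs_le]; constructor <;> linarith
    _ = 1 / 4 := mul_one _

theorem abs_sub_le_of_hasDerivAt_of_abs_le {f f' : ℝ → ℝ} {C : ℝ}
    (hf : ∀ x, HasDerivAt f (f' x) x) (hC : ∀ x, |f' x| ≤ C) (a b : ℝ) :
    |f a - f b| ≤ C * |a - b| := by
  simpa only [Real.norm_eq_abs] using convex_univ.norm_image_sub_le_of_norm_hasDerivWithin_le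
    (fun x _ => (hf x).hasDerivWithinAt) (fun x _ => hC x) (Set.mem_univ b) (Set.mem_univ a)

theorem abs_sigmoid_sub_le (a b : ℝ) : |sigmoid a - sigmoid b| ≤ 1 / 4 * |a - b| :=
  abs_sub_le_of_hasDerivAt_of_abs_le hasDerivAt_sigmoid abs_dsigmoid_le a b

theorem abs_dsigmoid_sub_le (a b : ℝ) : |dsigmoid a - dsigmoid b| ≤ 1 / 4 * |a - b| :=
  abs_sub_le_of_hasDerivAt_of_abs_le hasDerivAt_dsigmoid abs_dsigmoid_deriv_le a b

theorem sq_mul_le_sq_of_abs_le_one (c : ℝ) {y : ℝ} (hy : |y| ≤ 1) : (c * y) ^ 2 ≤ c ^ 2 := by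
  rw [mul_pow]
  exact mul_le_of_le_one_right (sq_nonneg c) ((sq_le_one_iff_abs_le_one y).2 hy)

theorem sum_sq_mul_le_card_mul_sq {ι : Type*} [Fintype ι] (c : ℝ) (x : ι → ℝ)
    (hx : ∀ i, |x i| ≤ 1) : ∑ i, (c * x i) ^ 2 ≤ Fintype.card ι * c ^ 2 := by
  calc ∑ i, (c * x i) ^ 2 ≤ ∑ _i : ι, c ^ 2 :=
        Finset.sum_le_sum fun i _ => sq_mul_le_sq_of_abs_le_one c (hx i)
    _ = Fintype.card ι * c ^ 2 := by simp

theorem sq_sum_mul_add_le {ι : Type*} [Fintype ι] (u x : ι → ℝ) (v : ℝ)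
    (hx : ∀ i, |x i| ≤ 1) :
    (∑ i, u i * x i + v) ^ 2 ≤ 2 * (Fintype.card ι + 1) * (∑ i, u i ^ 2 + v ^ 2) := by
  have hsum : (∑ i, u i * x i) ^ 2 ≤ Fintype.card ι * ∑ i, u i ^ 2 :=
    calc (∑ i, u i * x i) ^ 2 ≤ Fintype.card ι * ∑ i, (u i * x i) ^ 2 := by
          simpa using sq_sum_le_card_mul_sum_sq (s := Finset.univ) (f := fun i => u i * x i)
      _ ≤ Fintype.card ι * ∑ i, u i ^ 2 := by
          gcongr ?_ * ?_
          exact Finset.sum_le_sum fun i _ => sq_mul_le_sq_of_abs_le_one (u i) (hx i)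
  have hcard : (0 : ℝ) ≤ Fintype.card ι := Nat.cast_nonneg _
  have hu : 0 ≤ ∑ i, u i ^ 2 := Finset.sum_nonneg fun i _ => sq_nonneg (u i)
  nlinarith [add_sq_le (a := ∑ i, u i * x i) (b := v), sq_nonneg v]

theorem abs_mul_dsigmoid_sub_le {γ a ab z zb : ℝ} (hab : |ab| ≤ γ) :
    |a * dsigmoid z - ab * dsigmoid zb| ≤ 1 / 4 * |a - ab| + γ / 4 * |z - zb| := by
  calc |a * dsigmoid z - ab * dsigmoid zb|
      = |(a - ab) * dsigmoid z + ab * (dsigmoid z - dsigmoid zb)| := by ring_nf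
    _ ≤ |a - ab| * |dsigmoid z| + |ab| * |dsigmoid z - dsigmoid zb| := by
        simpa only [abs_mul] using
          abs_add_le ((a - ab) * dsigmoid z) (ab * (dsigmoid z - dsigmoid zb))
    _ ≤ |a - ab| * (1 / 4) + γ * (1 / 4 * |z - zb|) := by
        gcongr
        · exact abs_dsigmoid_le z
        · exact (abs_nonneg ab).trans hab
        · exact abs_dsigmoid_sub_le z zb
    _ = 1 / 4 * |a - ab| + γ / 4 * |z - zb| := by ring

theorem sq_mul_dsigmoid_sub_le {γ a ab z zb : ℝ} (hγ : 1 ≤ γ) (hab : |ab| ≤ γ) :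
    (a * dsigmoid z - ab * dsigmoid zb) ^ 2 ≤ γ ^ 2 / 8 * ((a - ab) ^ 2 + (z - zb) ^ 2) := by
  calc (a * dsigmoid z - ab * dsigmoid zb) ^ 2
      = |a * dsigmoid z - ab * dsigmoid zb| ^ 2 := (sq_abs _).symm
    _ ≤ (1 / 4 * |a - ab| + γ / 4 * |z - zb|) ^ 2 := by
        gcongr
        exact abs_mul_dsigmoid_sub_le hab
    _ ≤ 1 / 8 * (|a - ab| ^ 2 + γ ^ 2 * |z - zb| ^ 2) := by
        nlinarith [add_sq_le (a := |a - ab|) (b := γ * |z - zb|)]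
    _ ≤ γ ^ 2 / 8 * ((a - ab) ^ 2 + (z - zb) ^ 2) := by
        rw [sq_abs, sq_abs]
        nlinarith [one_le_pow₀ (n := 2) hγ, sq_nonneg (a - ab)]

theorem neuron_gradient_sq_le {D γ a ab z zb P : ℝ} (hD : 1 ≤ D) (hγ : 1 ≤ γ)
    (hab : |ab| ≤ γ) (hz : (z - zb) ^ 2 ≤ 2 * D * P) :
    (sigmoid z - sigmoid zb) ^ 2 + D * (a * dsigmoid z - ab * dsigmoid zb) ^ 2
      ≤ 4 * D ^ 2 * γ ^ 2 * ((a - ab) ^ 2 + P) := by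
  have hσ : (sigmoid z - sigmoid zb) ^ 2 ≤ 1 / 16 * (z - zb) ^ 2 := by
    rw [← sq_abs, ← sq_abs (z - zb)]
    nlinarith [abs_sigmoid_sub_le z zb, abs_nonneg (sigmoid z - sigmoid zb)]
  have hc : 1 ≤ D * γ ^ 2 := one_le_mul_of_one_le_of_one_le hD (one_le_pow₀ hγ)
  have hP : 0 ≤ P := by nlinarith [sq_nonneg (z - zb)]
  set A := (a - ab) ^ 2
  set Z := (z - zb) ^ 2
  have hA : 0 ≤ A := sq_nonneg _
  have hZ : 0 ≤ Z := sq_nonneg _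
  calc (sigmoid z - sigmoid zb) ^ 2 + D * (a * dsigmoid z - ab * dsigmoid zb) ^ 2
      ≤ 1 / 16 * Z + D * (γ ^ 2 / 8 * (A + Z)) := by
        gcongr
        exact sq_mul_dsigmoid_sub_le hγ hab
    _ ≤ D * γ ^ 2 * (1 / 8 * A + 3 / 16 * Z) := by nlinarith
    _ ≤ D * γ ^ 2 * (D / 8 * A + 3 / 8 * D * P) :=
        mul_le_mul_of_nonneg_left (by nlinarith) (by positivity)
    _ ≤ 4 * D ^ 2 * γ ^ 2 * (A + P) := by
        have hD2γ : 0 ≤ D ^ 2 * γ ^ 2 := by positivity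
        nlinarith

section ShallowNetwork

variable {d K : ℕ}

def preact (x : Evec d) (w : WVec d K) (j : Fin K) : ℝ := ∑ i, inw w j i * x i + inb w j

def preactCLM (x : Evec d) (j : Fin K) : WVec d K →L[ℝ] ℝ :=
  ∑ i, x i • EuclideanSpace.proj (Sum.inr (Sum.inl (j, i))) +
    EuclideanSpace.proj (Sum.inr (Sum.inr j))

@[simp]
theorem preactCLM_apply (x : Evec d) (j : Fin K) (v : WVec d K) :
    preactCLM x j v = preact x v j := by
  simp [preactCLM, preact, inw, inb, mul_comm]

def fnetFDeriv (σ σ' : ℝ → ℝ) (x : Evec d) (w : WVec d K) : WVec d K →L[ℝ] ℝ :=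
  EuclideanSpace.proj (Sum.inl 0) +
    ∑ j, (σ (preact x w j) • EuclideanSpace.proj (Sum.inl j.succ)
      + (outw w j.succ * σ' (preact x w j)) • preactCLM x j)

theorem fnetFDeriv_apply (σ σ' : ℝ → ℝ) (x : Evec d) (w v : WVec d K) :
    fnetFDeriv σ σ' x w v = outw v 0 + ∑ j, (σ (preact x w j) * outw v j.succ
      + outw w j.succ * σ' (preact x w j) * preact x v j) := by
  simp [fnetFDeriv, outw]

theorem hasFDerivAt_fnet {σ σ' : ℝ → ℝ} (hσ : ∀ t, HasDerivAt σ (σ' t) t) (x : Evec d)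
    (w : WVec d K) : HasFDerivAt (fun v => fnet σ v x) (fnetFDeriv σ σ' x w) w := by
  have hfnet : (fun v => fnet σ v x) = fun v : WVec d K =>
      EuclideanSpace.proj (Sum.inl 0) v + ∑ j : Fin K,
        EuclideanSpace.proj (Sum.inl j.succ) v * σ (preactCLM x j v) := by
    ext v
    simp [fnet, outw, preact]
  rw [hfnet]
  refine (EuclideanSpace.proj _).hasFDerivAt.add (HasFDerivAt.fun_sum fun j _ =>
    (EuclideanSpace.proj _).hasFDerivAt.mul
      ((hσ _).comp_hasFDerivAt w (preactCLM x j).hasFDerivAt)) |>.congr_fderiv ?_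
  ext v
  simp only [add_apply, sum_apply, smul_apply, smul_eq_mul, PiLp.proj_apply, preactCLM_apply,
    Function.comp_apply, fnetFDeriv_apply, outw, add_right_inj]
  exact Finset.sum_congr rfl fun j _ => by ring

theorem netPartial_eq (w : WVec d K) (x : Evec d) (idx : WIdx d K) :
    netPartial w x idx = fnetFDeriv sigmoid dsigmoid x w (EuclideanSpace.single idx 1) := by
  rw [netPartial, logistic_eq_sigmoid,
    (hasFDerivAt_fnet (σ' := dsigmoid) hasDerivAt_sigmoid x w).fderiv]

theorem netPartial_inl_zero (w : WVec d K) (x : Evec d) : netPartial w x (Sum.inl 0) = 1 := by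
  simp [netPartial_eq, fnetFDeriv_apply, outw, preact, inw, inb, Fin.succ_ne_zero]

theorem netPartial_inl_succ (w : WVec d K) (x : Evec d) (j : Fin K) :
    netPartial w x (Sum.inl j.succ) = sigmoid (preact x w j) := by
  simp [netPartial_eq, fnetFDeriv_apply, outw, preact, inw, inb, Fin.succ_ne_zero]

theorem netPartial_inner (w : WVec d K) (x : Evec d) (j : Fin K) (i : Fin d) :
    netPartial w x (Sum.inr (Sum.inl (j, i)))
      = outw w j.succ * dsigmoid (preact x w j) * x i := by
  simp [netPartial_eq, fnetFDeriv_apply, outw, preact, inw, inb, ite_and]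

theorem netPartial_bias (w : WVec d K) (x : Evec d) (j : Fin K) :
    netPartial w x (Sum.inr (Sum.inr j)) = outw w j.succ * dsigmoid (preact x w j) := by
  simp [netPartial_eq, fnetFDeriv_apply, outw, preact, inw, inb]

theorem sum_widx (f : WIdx d K → ℝ) :
    ∑ idx, f idx = f (Sum.inl 0) + ∑ j : Fin K, (f (Sum.inl j.succ)
      + ∑ i, f (Sum.inr (Sum.inl (j, i))) + f (Sum.inr (Sum.inr j))) := by
  rw [Fintype.sum_sum_type, Fintype.sum_sum_type, Fin.sum_univ_succ, Fintype.sum_prod_type,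
    Finset.sum_add_distrib, Finset.sum_add_distrib]
  ring

def neuronSqDist (w wb : WVec d K) (j : Fin K) : ℝ :=
  (outw w j.succ - outw wb j.succ) ^ 2 + ∑ i, (inw w j i - inw wb j i) ^ 2
    + (inb w j - inb wb j) ^ 2

theorem sum_neuronSqDist_le_norm_sq (w wb : WVec d K) :
    ∑ j, neuronSqDist w wb j ≤ ‖w - wb‖ ^ 2 := by
  rw [EuclideanSpace.real_norm_sq_eq, sum_widx]
  exact le_add_of_nonneg_left (sq_nonneg _)

theorem sq_preact_sub_le {x : Evec d} (hx : ∀ i, |x i| ≤ 1) (w wb : WVec d K) (j : Fin K) :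
    (preact x w j - preact x wb j) ^ 2
      ≤ 2 * (d + 1) * (∑ i, (inw w j i - inw wb j i) ^ 2 + (inb w j - inb wb j) ^ 2) := by
  have hdiff : preact x w j - preact x wb j
      = ∑ i, (inw w j i - inw wb j i) * x i + (inb w j - inb wb j) := by
    simp only [preact, sub_mul, Finset.sum_sub_distrib]
    ring
  rw [hdiff]
  simpa using sq_sum_mul_add_le _ _ _ hx

theorem neuron_sq_netPartial_sub_le {γ : ℝ} (hγ : 1 ≤ γ) {x : Evec d} (hx : ∀ i, |x i| ≤ 1)
    (w wb : WVec d K) {j : Fin K} (hwb : |outw wb j.succ| ≤ γ) :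
    (netPartial w x (Sum.inl j.succ) - netPartial wb x (Sum.inl j.succ)) ^ 2
      + ∑ i, (netPartial w x (Sum.inr (Sum.inl (j, i)))
        - netPartial wb x (Sum.inr (Sum.inl (j, i)))) ^ 2
      + (netPartial w x (Sum.inr (Sum.inr j)) - netPartial wb x (Sum.inr (Sum.inr j))) ^ 2
      ≤ 4 * (d + 1) ^ 2 * γ ^ 2 * neuronSqDist w wb j := by
  simp only [netPartial_inl_succ, netPartial_inner, netPartial_bias, ← sub_mul]
  set c := outw w j.succ * dsigmoid (preact x w j) - outw wb j.succ * dsigmoid (preact x wb j)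
  have hinner : ∑ i, (c * x i) ^ 2 ≤ d * c ^ 2 := by
    simpa using sum_sq_mul_le_card_mul_sq c _ hx
  calc _ ≤ (sigmoid (preact x w j) - sigmoid (preact x wb j)) ^ 2 + (d + 1) * c ^ 2 := by
        linarith
    _ ≤ _ := by
        rw [neuronSqDist, add_assoc]
        exact neuron_gradient_sq_le (by simp) hγ hwb (sq_preact_sub_le hx w wb j)

end ShallowNetwork

/-- Lemma 7: Lipschitz property of the gradient of a shallow logistic
network with respect to the weights. -/
theorem statement10 (d K : ℕ) (γ : ℝ) (hγ : 1 ≤ γ)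
    (w wb : WVec d K) (hwb : ∀ j : Fin K, |outw wb j.succ| ≤ γ)
    (x : Evec d) (hx : ∀ i, x i ∈ Set.Icc (0 : ℝ) 1) :
    ∑ idx : WIdx d K, (netPartial w x idx - netPartial wb x idx) ^ 2
      ≤ 4 * (d + 1) ^ 2 * γ ^ 2 * ‖w - wb‖ ^ 2 := by
  have hx' : ∀ i, |x i| ≤ 1 := fun i => abs_le.2 ⟨by linarith [(hx i).1], (hx i).2⟩
  rw [sum_widx, netPartial_inl_zero, netPartial_inl_zero, sub_self, zero_pow two_ne_zero,
    zero_add]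
  calc _ ≤ ∑ j, 4 * (d + 1) ^ 2 * γ ^ 2 * neuronSqDist w wb j :=
        Finset.sum_le_sum fun j _ => neuron_sq_netPartial_sub_le hγ hx' w wb (hwb j)
    _ = 4 * (d + 1) ^ 2 * γ ^ 2 * ∑ j, neuronSqDist w wb j := (Finset.mul_sum ..).symm
    _ ≤ 4 * (d + 1) ^ 2 * γ ^ 2 * ‖w - wb‖ ^ 2 := by
        gcongr
        exact sum_neuronSqDist_le_norm_sq w wb

end
end
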